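/- arXiv:2405.16954 — 4 statements merged into one kernel-verified Lean document; each statement's English description precedes it below -/
import Mathlib

section
/- Suppose the positive step sizes {α_k} satisfy α_k → 0 and Σ_{k≥1} α_k = ∞. Then for every time window T > 0 (with associated time indices {γ_k}) and every δ ∈ [0,1), there exists K_δ ∈ ℕ such that δT ≤ Δ_{γ_k, γ_{k+1}} ≤ T for all k ≥ K_δ. -/
open MeasureTheory Filter Topology Asymptotics ENNReal

noncomputable section

/-- `Δ_{k,n} = α_k + ⋯ + α_{n-1}` (and `Δ_{k,k} = 0`). -/
def timeScale (a : ℕ → ℝ) (k n : ℕ) : ℝ := ∑ i ∈ Finset.Ico k n, a i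

/-- `ϖ(k,T) = max {k+1, sup {n ≥ k : Δ_{k,n} ≤ T}}`. -/
def varpi (a : ℕ → ℝ) (T : ℝ) (k : ℕ) : ℕ :=
  max (k + 1) (sSup {n : ℕ | k ≤ n ∧ timeScale a k n ≤ T})

/-- Time indices: `γ 1 = 1`, `γ (k+1) = ϖ(γ k, T)` (with junk value `γ 0 = 1`). -/
def timeIdx (a : ℕ → ℝ) (T : ℝ) : ℕ → ℕ
  | 0 => 1
  | 1 => 1
  | k + 2 => varpi a T (timeIdx a T (k + 1))

/-!
Once `α_n < (1 - δ) T` for all large `n`, the window starting at `γ_k` is the longest one of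
length `≤ T`, which exists because the partial sums diverge. Adding the next step `α_{γ_{k+1}}`
overshoots `T`, and that step is less than `(1 - δ) T`, so the window has length at least `δ T`.
-/

theorem timeScale_add_timeScale (a : ℕ → ℝ) {k m n : ℕ} (hkm : k ≤ m) (hmn : m ≤ n) :
    timeScale a k m + timeScale a m n = timeScale a k n :=
  Finset.sum_Ico_consecutive a hkm hmn

theorem timeScale_succ_right (a : ℕ → ℝ) {k n : ℕ} (hkn : k ≤ n) :
    timeScale a k (n + 1) = timeScale a k n + a n :=
  Finset.sum_Ico_succ_top hkn a

theorem tendsto_timeScale_atTop {a : ℕ → ℝ}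
    (hadiv : Tendsto (fun n => ∑ i ∈ Finset.Icc 1 n, a i) atTop atTop) {k : ℕ} (hk : 1 ≤ k) :
    Tendsto (timeScale a k) atTop atTop := by
  have hone : Tendsto (timeScale a 1) atTop atTop := by
    rw [← tendsto_add_atTop_iff_nat 1]
    simpa only [timeScale, Finset.Ico_add_one_right_eq_Icc] using hadiv
  refine (tendsto_atTop_add_const_right _ (-timeScale a 1 k) hone).congr' ?_
  filter_upwards [eventually_ge_atTop k] with n hn
  linarith [timeScale_add_timeScale a hk hn]

theorem timeScale_varpi {a : ℕ → ℝ} {T : ℝ} {k : ℕ}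
    (hdiv : Tendsto (timeScale a k) atTop atTop) (hak : a k ≤ T) :
    timeScale a k (varpi a T k) ≤ T ∧ T < timeScale a k (varpi a T k) + a (varpi a T k) := by
  set S := {n : ℕ | k ≤ n ∧ timeScale a k n ≤ T}
  have hbdd : BddAbove S := by
    obtain ⟨N, hN⟩ := eventually_atTop.mp (hdiv.eventually_gt_atTop T)
    exact ⟨N, fun n hn => not_lt.mp fun hNn => (hN n hNn.le).not_ge hn.2⟩
  have hsucc : k + 1 ∈ S := ⟨k.le_succ, by simpa [timeScale_succ_right a le_rfl, timeScale]⟩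
  have hle : k + 1 ≤ sSup S := le_csSup hbdd hsucc
  have hvarpi : varpi a T k = sSup S := max_eq_right hle
  have hnext : sSup S + 1 ∉ S := fun h => (le_csSup hbdd h).not_gt (Nat.lt_succ_self _)
  rw [hvarpi, ← timeScale_succ_right a (by omega)]
  refine ⟨(Nat.sSup_mem ⟨_, hsucc⟩ hbdd).2, not_le.mp fun h => hnext ⟨by omega, h⟩⟩

theorem lt_varpi (a : ℕ → ℝ) (T : ℝ) (k : ℕ) : k < varpi a T k :=
  Nat.lt_of_succ_le (le_max_left _ _)

theorem timeIdx_succ (a : ℕ → ℝ) (T : ℝ) {k : ℕ} (hk : 1 ≤ k) :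
    timeIdx a T (k + 1) = varpi a T (timeIdx a T k) := by
  obtain ⟨j, rfl⟩ := Nat.exists_eq_add_of_le' hk
  rfl

theorem le_timeIdx_add_one (a : ℕ → ℝ) (T : ℝ) (k : ℕ) : k ≤ timeIdx a T k + 1 := by
  induction k with
  | zero => exact Nat.zero_le _
  | succ k ih =>
    rcases Nat.eq_zero_or_pos k with rfl | hk
    · simp [timeIdx]
    · rw [timeIdx_succ a T hk]
      linarith [lt_varpi a T (timeIdx a T k)]

theorem stmt_0_general (a : ℕ → ℝ)
    (ha0 : Tendsto a atTop (𝓝 0))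
    (hadiv : Tendsto (fun n => ∑ i ∈ Finset.Icc 1 n, a i) atTop atTop)
    (T : ℝ) (hT : 0 < T) (δ : ℝ) (hδ : δ ∈ Set.Ico (0:ℝ) 1) :
    ∃ K : ℕ, ∀ k, K ≤ k →
      δ * T ≤ timeScale a (timeIdx a T k) (timeIdx a T (k + 1)) ∧
      timeScale a (timeIdx a T k) (timeIdx a T (k + 1)) ≤ T := by
  obtain ⟨hδ0, hδ1⟩ := hδ
  have hgap : 0 < (1 - δ) * T := mul_pos (by linarith) hT
  obtain ⟨N, hN⟩ := eventually_atTop.mp (ha0.eventually (gt_mem_nhds hgap))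
  refine ⟨N + 2, fun k hk => ?_⟩
  set g := timeIdx a T k
  have hg : N + 1 ≤ g := by linarith [le_timeIdx_add_one a T k]
  have hag : a g ≤ T := by nlinarith [hN g (by omega)]
  rw [timeIdx_succ a T (by omega)]
  obtain ⟨hupper, hovershoot⟩ := timeScale_varpi (tendsto_timeScale_atTop hadiv (by omega)) hag
  have hnext := hN (varpi a T g) (by linarith [lt_varpi a T g])
  exact ⟨by nlinarith, hupper⟩

theorem stmt_0 (a : ℕ → ℝ) (hapos : ∀ k, 1 ≤ k → 0 < a k)
    (ha0 : Tendsto a atTop (𝓝 0))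
    (hadiv : Tendsto (fun n => ∑ i ∈ Finset.Icc 1 n, a i) atTop atTop)
    (T : ℝ) (hT : 0 < T) (δ : ℝ) (hδ : δ ∈ Set.Ico (0:ℝ) 1) :
    ∃ K : ℕ, ∀ k, K ≤ k →
      δ * T ≤ timeScale a (timeIdx a T k) (timeIdx a T (k + 1)) ∧
      timeScale a (timeIdx a T k) (timeIdx a T (k + 1)) ≤ T :=
  stmt_0_general a ha0 hadiv T hT δ hδ
end
end

section
/- Under the SGDM setup with the noise assumption and step sizes satisfying condition (S) with non-decreasing sequence {β_k}, for every time window T > 0 with associated time indices {γ_k}, with probability 1 one has Σ_{k=1}^∞ β_{γ_k}² s_k² < ∞. -/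
/-!
Write `D_i = α_i e^i`; solving the update rule for the noise shows that `D_i` is
`ℱ_{i+1}`-measurable, so `(D_i)` is a square-integrable martingale difference sequence. For its
partial sums `S_j` and running maximum `M_j = max_{l ≤ j} ‖S_l‖` one has, path by path,
`M_n² ≤ 4‖S_n‖² - 4 ∑_{j<n} M_j ⟪S_j / ‖S_j‖, D_j⟫`, and every summand on the right has mean
zero because `M_j S_j / ‖S_j‖` is `ℱ_j`-measurable. Hence `E M_n² ≤ 4 E‖S_n‖² = 4 ∑ E‖D_j‖²`
(Doob's `L²` inequality). On the block `Γ_k` this gives, by monotonicity of `β`,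
`E[β_{γ_k}² s_k²] ≤ 4σ² ∑_{i ∈ Γ_k} α_i² β_i²`, which is summable in `k` by (S). So
`∑_k β_{γ_k}² s_k²` has finite expectation and converges almost surely.
-/

open MeasureTheory Filter Topology Asymptotics ENNReal

noncomputable section

/-- Aggregated error `s_k(ω) = max_{t ∈ Γ_k} ‖∑_{i=γ_k}^{t-1} α_i e^i‖`. -/
def aggErr {Ω E : Type*} [NormedAddCommGroup E] [NormedSpace ℝ E]
    (a : ℕ → ℝ) (γ : ℕ → ℕ) (e : ℕ → Ω → E) (k : ℕ) (ω : Ω) : ℝ :=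
  sSup ((fun t => ‖∑ i ∈ Finset.Ico (γ k) t, a i • e i ω‖) '' Set.Ioc (γ k) (γ (k + 1)))


open Finset
open scoped RealInnerProductSpace

theorem sum_partialSups_mul_sub_le (a : ℕ → ℝ) (n : ℕ) :
    ∑ j ∈ range n, partialSups a j * (a (j + 1) - a j) ≤
      partialSups a n * a n - partialSups a n ^ 2 / 2 := by
  induction n with
  | zero => simp only [range_zero, sum_empty, partialSups_zero]; nlinarith [sq_nonneg (a 0)]
  | succ n ih =>
    rw [sum_range_succ, partialSups_add_one]
    rcases le_total (a (n + 1)) (partialSups a n) with h | h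
    · rw [sup_of_le_left h]; nlinarith
    · rw [sup_of_le_right h]; nlinarith [sq_nonneg (a (n + 1) - partialSups a n)]

theorem partialSups_sq_le (a : ℕ → ℝ) (n : ℕ) :
    partialSups a n ^ 2 ≤
      4 * a n ^ 2 - 4 * ∑ j ∈ range n, partialSups a j * (a (j + 1) - a j) := by
  have hsum := sum_partialSups_mul_sub_le a n
  have hle : a n ≤ partialSups a n := le_partialSups a n
  nlinarith [sq_nonneg (2 * a n - partialSups a n)]

section InnerProductSpace

variable {E : Type*} [NormedAddCommGroup E] [InnerProductSpace ℝ E]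

theorem inner_inv_norm_smul_sub_le (v w : E) : ⟪‖v‖⁻¹ • v, w - v⟫ ≤ ‖w‖ - ‖v‖ := by
  rcases eq_or_ne v 0 with rfl | hv
  · simp
  have hself : ⟪‖v‖⁻¹ • v, v⟫ = ‖v‖ := by
    rw [real_inner_smul_left, real_inner_self_eq_norm_sq]
    field_simp
  have hw : ⟪‖v‖⁻¹ • v, w⟫ ≤ ‖w‖ :=
    (real_inner_le_norm _ _).trans_eq <| by
      rw [norm_smul, norm_inv, norm_norm, inv_mul_cancel₀ (norm_ne_zero_iff.2 hv), one_mul]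
  rw [inner_sub_right]
  linarith

theorem partialSups_norm_sq_le (S : ℕ → E) (n : ℕ) :
    partialSups (‖S ·‖) n ^ 2 ≤ 4 * ‖S n‖ ^ 2 -
      4 * ∑ j ∈ range n, ⟪partialSups (‖S ·‖) j • ‖S j‖⁻¹ • S j, S (j + 1) - S j⟫ := by
  have hterm : ∀ j ∈ range n, ⟪partialSups (‖S ·‖) j • ‖S j‖⁻¹ • S j, S (j + 1) - S j⟫ ≤
      partialSups (‖S ·‖) j * (‖S (j + 1)‖ - ‖S j‖) := fun j _ => by
    rw [real_inner_smul_left]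
    exact mul_le_mul_of_nonneg_left (inner_inv_norm_smul_sub_le _ _)
      ((norm_nonneg _).trans (le_partialSups (‖S ·‖) j))
  have hreal := partialSups_sq_le (‖S ·‖) n
  have hsum := sum_le_sum hterm
  linarith

variable {Ω : Type*} {m0 : MeasurableSpace Ω} {μ : Measure Ω}

theorem MeasureTheory.MemLp.integrable_inner {Y Z : Ω → E} (hY : MemLp Y 2 μ)
    (hZ : MemLp Z 2 μ) : Integrable (fun ω => ⟪Y ω, Z ω⟫) μ :=
  memLp_one_iff_integrable.mp <| hY.of_bilin (fun v w => ⟪v, w⟫) 1 hZ (hY.1.inner hZ.1)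
    (ae_of_all _ fun ω => by simpa only [one_mul] using nnnorm_inner_le_nnnorm (Y ω) (Z ω))

theorem integral_inner_eq_zero_of_condExp_eq_zero [CompleteSpace E] {m : MeasurableSpace Ω}
    (hm : m ≤ m0) [SigmaFinite (μ.trim hm)] {Y e : Ω → E} (hY : StronglyMeasurable[m] Y)
    (hYe : Integrable (fun ω => ⟪Y ω, e ω⟫) μ) (he : Integrable e μ) (he0 : μ[e|m] =ᵐ[μ] 0) :
    ∫ ω, ⟪Y ω, e ω⟫ ∂μ = 0 := by
  rw [← integral_condExp hm]
  have hpull := condExp_bilin_of_stronglyMeasurable_left (innerSL ℝ) hY hYe he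
  exact (integral_congr_ae (hpull.trans (he0.mono fun ω h => by simp [h]))).trans
    (integral_zero _ _)

end InnerProductSpace

section RunningMax

variable {Ω : Type*} {m : MeasurableSpace Ω} {μ : Measure Ω}

theorem MeasureTheory.StronglyMeasurable.partialSups {β : Type*} [TopologicalSpace β]
    [SemilatticeSup β] [ContinuousSup β] {f : ℕ → Ω → β} {n : ℕ}
    (hf : ∀ j ≤ n, StronglyMeasurable (f j)) : StronglyMeasurable (partialSups f n) := by
  induction n with
  | zero => simpa using hf 0 le_rfl
  | succ n ih =>
    rw [partialSups_add_one]
    exact (ih fun j hj => hf j (by omega)).sup (hf (n + 1) le_rfl)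

theorem MeasureTheory.MemLp.partialSups {p : ℝ≥0∞} {f : ℕ → Ω → ℝ} {n : ℕ}
    (hf : ∀ j ≤ n, MemLp (f j) p μ) : MemLp (partialSups f n) p μ := by
  induction n with
  | zero => simpa using hf 0 le_rfl
  | succ n ih =>
    rw [partialSups_add_one]
    exact (ih fun j hj => hf j (by omega)).sup (hf (n + 1) le_rfl)

end RunningMax

namespace MeasureTheory

variable {Ω E : Type*} [NormedAddCommGroup E] [InnerProductSpace ℝ E]
  {m0 : MeasurableSpace Ω} {μ : Measure Ω}

def Filtration.shift (ℱ : Filtration ℕ m0) (g : ℕ) : Filtration ℕ m0 where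
  seq i := ℱ (g + i)
  mono' _ _ h := ℱ.mono (Nat.add_le_add_left h g)
  le' i := ℱ.le (g + i)

structure IsL2MartingaleDifference (ℱ : Filtration ℕ m0) (D : ℕ → Ω → E) (μ : Measure Ω) :
    Prop where
  stronglyMeasurable : ∀ i, StronglyMeasurable[ℱ (i + 1)] (D i)
  memLp : ∀ i, MemLp (D i) 2 μ
  condExp_eq_zero : ∀ i, μ[D i|ℱ i] =ᵐ[μ] 0

namespace IsL2MartingaleDifference

variable {ℱ : Filtration ℕ m0} {D : ℕ → Ω → E}

theorem integral_inner_eq_zero [CompleteSpace E] [IsFiniteMeasure μ]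
    (hD : IsL2MartingaleDifference ℱ D μ) {i : ℕ} {Y : Ω → E}
    (hY : StronglyMeasurable[ℱ i] Y) (hY2 : MemLp Y 2 μ) : ∫ ω, ⟪Y ω, D i ω⟫ ∂μ = 0 :=
  integral_inner_eq_zero_of_condExp_eq_zero (ℱ.le i) hY (hY2.integrable_inner (hD.memLp i))
    ((hD.memLp i).integrable one_le_two) (hD.condExp_eq_zero i)

theorem stronglyMeasurable_sum (hD : IsL2MartingaleDifference ℱ D μ) (n : ℕ) :
    StronglyMeasurable[ℱ n] fun ω => ∑ i ∈ range n, D i ω :=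
  Finset.stronglyMeasurable_fun_sum _ fun i hi =>
    (hD.stronglyMeasurable i).mono (ℱ.mono (mem_range.1 hi))

theorem memLp_sum (hD : IsL2MartingaleDifference ℱ D μ) (n : ℕ) :
    MemLp (fun ω => ∑ i ∈ range n, D i ω) 2 μ :=
  memLp_finsetSum _ fun i _ => hD.memLp i

theorem integral_norm_sum_sq [CompleteSpace E] [IsFiniteMeasure μ]
    (hD : IsL2MartingaleDifference ℱ D μ) (n : ℕ) :
    ∫ ω, ‖∑ i ∈ range n, D i ω‖ ^ 2 ∂μ = ∑ i ∈ range n, ∫ ω, ‖D i ω‖ ^ 2 ∂μ := by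
  induction n with
  | zero => simp
  | succ n ih =>
    have hS := hD.memLp_sum n
    have hinner : Integrable (fun ω => 2 * ⟪∑ i ∈ range n, D i ω, D n ω⟫) μ :=
      (hS.integrable_inner (hD.memLp n)).const_mul 2
    have hfirst : Integrable
        (fun ω => ‖∑ i ∈ range n, D i ω‖ ^ 2 + 2 * ⟪∑ i ∈ range n, D i ω, D n ω⟫) μ :=
      hS.norm.integrable_sq.add hinner
    simp_rw [sum_range_succ, norm_add_sq_real]
    rw [integral_add hfirst (hD.memLp n).norm.integrable_sq, integral_add hS.norm.integrable_sq
      hinner, integral_const_mul, hD.integral_inner_eq_zero (hD.stronglyMeasurable_sum n) hS, ih]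
    ring

theorem stronglyMeasurable_partialSups (hD : IsL2MartingaleDifference ℱ D μ) (n : ℕ) :
    StronglyMeasurable[ℱ n] (partialSups (fun j ω => ‖∑ i ∈ range j, D i ω‖) n) :=
  StronglyMeasurable.partialSups fun j hj => ((hD.stronglyMeasurable_sum j).mono (ℱ.mono hj)).norm

theorem memLp_partialSups (hD : IsL2MartingaleDifference ℱ D μ) (n : ℕ) :
    MemLp (partialSups (fun j ω => ‖∑ i ∈ range j, D i ω‖) n) 2 μ :=
  MemLp.partialSups fun j _ => (hD.memLp_sum j).norm

theorem integral_partialSups_sq_le [CompleteSpace E] [IsFiniteMeasure μ]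
    (hD : IsL2MartingaleDifference ℱ D μ) (n : ℕ) :
    ∫ ω, partialSups (fun j ω => ‖∑ i ∈ range j, D i ω‖) n ω ^ 2 ∂μ ≤
      4 * ∑ i ∈ range n, ∫ ω, ‖D i ω‖ ^ 2 ∂μ := by
  set S : ℕ → Ω → E := fun j ω => ∑ i ∈ range j, D i ω
  set M := partialSups fun j ω => ‖S j ω‖
  -- `Y` is predictable, so its inner products with `D` integrate to zero.
  set Y : ℕ → Ω → E := fun j ω => M j ω • ‖S j ω‖⁻¹ • S j ω
  have hY_meas : ∀ j, StronglyMeasurable[ℱ j] (Y j) := fun j =>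
    (hD.stronglyMeasurable_partialSups j).smul
      ((hD.stronglyMeasurable_sum j).norm.measurable.inv.stronglyMeasurable.smul
        (hD.stronglyMeasurable_sum j))
  have hY_memLp : ∀ j, MemLp (Y j) 2 μ := fun j =>
    (hD.memLp_partialSups j).of_le ((hY_meas j).mono (ℱ.le j)).aestronglyMeasurable <|
      ae_of_all _ fun ω => by
        simp only [Y, norm_smul, norm_inv, norm_norm]
        exact mul_le_of_le_one_right (norm_nonneg _) (inv_mul_le_one_of_le₀ le_rfl (norm_nonneg _))
  have hIY : Integrable (fun ω => ∑ j ∈ range n, ⟪Y j ω, D j ω⟫) μ :=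
    integrable_finsetSum _ fun j _ => (hY_memLp j).integrable_inner (hD.memLp j)
  have hpath : ∀ ω, M n ω ^ 2 ≤ 4 * ‖S n ω‖ ^ 2 - 4 * ∑ j ∈ range n, ⟪Y j ω, D j ω⟫ := by
    intro ω
    simpa only [M, Y, Pi.partialSups_apply, S, sum_range_succ_sub_sum] using
      partialSups_norm_sq_le (S · ω) n
  calc ∫ ω, M n ω ^ 2 ∂μ
      ≤ ∫ ω, (4 * ‖S n ω‖ ^ 2 - 4 * ∑ j ∈ range n, ⟪Y j ω, D j ω⟫) ∂μ :=
        integral_mono (hD.memLp_partialSups n).integrable_sq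
          (((hD.memLp_sum n).norm.integrable_sq.const_mul 4).sub (hIY.const_mul 4)) hpath
    _ = 4 * ∑ i ∈ range n, ∫ ω, ‖D i ω‖ ^ 2 ∂μ := by
        rw [integral_sub ((hD.memLp_sum n).norm.integrable_sq.const_mul 4) (hIY.const_mul 4),
          integral_const_mul, integral_const_mul, hD.integral_norm_sum_sq,
          integral_finsetSum _ fun j _ => (hY_memLp j).integrable_inner (hD.memLp j),
          sum_eq_zero fun j _ => hD.integral_inner_eq_zero (hY_meas j) (hY_memLp j)]
        ring

theorem integral_mul_partialSups_sq_le [CompleteSpace E] [IsFiniteMeasure μ]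
    (hD : IsL2MartingaleDifference ℱ D μ) {a b : ℕ → ℝ} {σ : ℝ} (hb : Monotone b) (hb0 : 0 ≤ b 0)
    (hvar : ∀ i, ∫ ω, ‖D i ω‖ ^ 2 ∂μ ≤ a i ^ 2 * σ ^ 2) (n : ℕ) :
    ∫ ω, b 0 ^ 2 * partialSups (fun j ω => ‖∑ i ∈ range j, D i ω‖) n ω ^ 2 ∂μ ≤
      4 * σ ^ 2 * ∑ i ∈ range n, a i ^ 2 * b i ^ 2 := by
  rw [integral_const_mul]
  calc b 0 ^ 2 * ∫ ω, partialSups (fun j ω => ‖∑ i ∈ range j, D i ω‖) n ω ^ 2 ∂μ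
      ≤ b 0 ^ 2 * (4 * ∑ i ∈ range n, a i ^ 2 * σ ^ 2) := by
        gcongr
        exact (hD.integral_partialSups_sq_le n).trans (by gcongr with i; exact hvar i)
    _ = 4 * σ ^ 2 * ∑ i ∈ range n, a i ^ 2 * b 0 ^ 2 := by
        rw [mul_sum, mul_sum, mul_sum]; exact sum_congr rfl fun i _ => by ring
    _ ≤ 4 * σ ^ 2 * ∑ i ∈ range n, a i ^ 2 * b i ^ 2 := by
        gcongr with i
        exact hb i.zero_le

end IsL2MartingaleDifference

end MeasureTheory

theorem ae_summable_of_summable_integral {Ω : Type*} {m0 : MeasurableSpace Ω} {μ : Measure Ω}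
    {F : ℕ → Ω → ℝ} (hF : ∀ k, Integrable (F k) μ) (hF0 : ∀ k ω, 0 ≤ F k ω)
    (hsum : Summable fun k => ∫ ω, F k ω ∂μ) : ∀ᵐ ω ∂μ, Summable fun k => F k ω := by
  have hnorm : ∀ k, ∫ ω, ‖F k ω‖ ∂μ = ∫ ω, F k ω ∂μ := fun k =>
    integral_congr_ae (ae_of_all _ fun ω => Real.norm_of_nonneg (hF0 k ω))
  have hfin : ∑' k, eLpNorm (F k) 1 μ ≠ ∞ := by
    simp_rw [eLpNorm_one_eq_lintegral_enorm, ← ofReal_integral_norm_eq_lintegral_enorm (hF _),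
      hnorm]
    rw [← ENNReal.ofReal_tsum_of_nonneg (fun k => integral_nonneg (hF0 k)) hsum]
    exact ofReal_ne_top
  filter_upwards [summable_norm_of_tsum_eLpNorm_ne_top le_rfl (fun k => (hF k).1) hfin] with ω hω
  simpa only [Real.norm_of_nonneg (hF0 _ ω)] using hω

theorem summable_sum_Ico_of_monotone {c : ℕ → ℝ} (hc : ∀ i, 0 ≤ c i) (hsum : Summable c)
    {γ : ℕ → ℕ} (hγ : Monotone γ) : Summable fun k => ∑ i ∈ Ico (γ k) (γ (k + 1)), c i := by
  refine summable_of_sum_range_le (c := ∑' i, c i) (fun k => sum_nonneg fun i _ => hc i)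
    fun K => ?_
  have htel : ∑ k ∈ range K, ∑ i ∈ Ico (γ k) (γ (k + 1)), c i = ∑ i ∈ Ico (γ 0) (γ K), c i := by
    induction K with
    | zero => simp
    | succ K ih => rw [sum_range_succ, ih, sum_Ico_consecutive _ (hγ K.zero_le) (hγ K.le_succ)]
  rw [htel]
  exact hsum.sum_le_tsum _ fun i _ => hc i

theorem timeIdx_le_succ (a : ℕ → ℝ) (T : ℝ) : ∀ k, timeIdx a T k ≤ timeIdx a T (k + 1)
  | 0 => le_rfl
  | _ + 1 => (Nat.le_succ _).trans (le_max_left _ _)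

theorem monotone_timeIdx (a : ℕ → ℝ) (T : ℝ) : Monotone (timeIdx a T) :=
  monotone_nat_of_le_succ (timeIdx_le_succ a T)

theorem one_le_timeIdx (a : ℕ → ℝ) (T : ℝ) (k : ℕ) : 1 ≤ timeIdx a T k :=
  monotone_timeIdx a T k.zero_le

section AggErr

variable {Ω E : Type*} [NormedAddCommGroup E] [NormedSpace ℝ E]

theorem aggErr_nonneg (a : ℕ → ℝ) (γ : ℕ → ℕ) (e : ℕ → Ω → E) (k : ℕ) (ω : Ω) :
    0 ≤ aggErr a γ e k ω :=
  Real.sSup_nonneg fun _ ⟨_, _, hv⟩ => hv ▸ norm_nonneg _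

theorem aggErr_le_partialSups (a : ℕ → ℝ) (γ : ℕ → ℕ) (e : ℕ → Ω → E) (k : ℕ) (ω : Ω) :
    aggErr a γ e k ω ≤ partialSups (fun j ω => ‖∑ i ∈ range j, a (γ k + i) • e (γ k + i) ω‖)
      (γ (k + 1) - γ k) ω := by
  set s : ℕ → ℝ := fun j => ‖∑ i ∈ range j, a (γ k + i) • e (γ k + i) ω‖
  rw [Pi.partialSups_apply]
  refine Real.sSup_le ?_ ((norm_nonneg _).trans (le_partialSups_of_le s (Nat.zero_le _)))
  rintro _ ⟨t, ht, rfl⟩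
  beta_reduce
  rw [sum_Ico_eq_sum_range]
  exact le_partialSups_of_le s (Nat.sub_le_sub_right ht.2 _)

end AggErr

theorem integral_le_of_condExp_le {Ω : Type*} {m m0 : MeasurableSpace Ω} {μ : Measure Ω}
    [IsProbabilityMeasure μ] (hm : m ≤ m0) {f : Ω → ℝ} {c : ℝ} (hf : ∀ᵐ ω ∂μ, μ[f|m] ω ≤ c) :
    ∫ ω, f ω ∂μ ≤ c :=
  calc ∫ ω, f ω ∂μ = ∫ ω, μ[f|m] ω ∂μ := (integral_condExp hm).symm
    _ ≤ ∫ _, c ∂μ := integral_mono_ae integrable_condExp (integrable_const c) hf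
    _ = c := by simp

section Gradient

variable {E : Type*} [NormedAddCommGroup E] [InnerProductSpace ℝ E] [CompleteSpace E]
  [MeasurableSpace E] [BorelSpace E]

theorem measurable_gradient (f : E → ℝ) : Measurable (gradient f) :=
  (InnerProductSpace.toDual ℝ E).symm.continuous.measurable.comp (measurable_fderiv ℝ f)

theorem stronglyMeasurable_smul_noise [SecondCountableTopology E] {Ω : Type*}
    {m0 : MeasurableSpace Ω} (ℱ : Filtration ℕ m0) (f : E → ℝ) (lam nu : ℝ) (al : ℕ → ℝ)
    {x e : ℕ → Ω → E} (hxmeas : ∀ k, StronglyMeasurable[ℱ k] (x k))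
    (hupd : ∀ k, 1 ≤ k → ∀ ω, x (k + 1) ω =
      x k ω - al k • (gradient f (x k ω + nu • (x k ω - x (k - 1) ω)) - e k ω)
        + lam • (x k ω - x (k - 1) ω))
    {k : ℕ} (hk : 1 ≤ k) : StronglyMeasurable[ℱ (k + 1)] fun ω => al k • e k ω := by
  have hx : ∀ j ≤ k + 1, StronglyMeasurable[ℱ (k + 1)] (x j) := fun j hj =>
    (hxmeas j).mono (ℱ.mono hj)
  have hmom : StronglyMeasurable[ℱ (k + 1)] fun ω => x k ω - x (k - 1) ω :=
    (hx k k.le_succ).sub (hx (k - 1) (by omega))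
  have hgrad : StronglyMeasurable[ℱ (k + 1)]
      fun ω => gradient f (x k ω + nu • (x k ω - x (k - 1) ω)) :=
    ((measurable_gradient f).comp ((hx k k.le_succ).add (hmom.const_smul nu)).measurable)
      |>.stronglyMeasurable
  have heq : (fun ω => al k • e k ω) = fun ω => x (k + 1) ω - x k ω +
      al k • gradient f (x k ω + nu • (x k ω - x (k - 1) ω)) - lam • (x k ω - x (k - 1) ω) := by
    funext ω
    rw [hupd k hk ω, smul_sub]
    abel
  rw [heq]
  exact (((hx _ le_rfl).sub (hx k k.le_succ)).add (hgrad.const_smul _)).sub (hmom.const_smul _)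

theorem isL2MartingaleDifference_smul_noise [SecondCountableTopology E] {Ω : Type*}
    {m0 : MeasurableSpace Ω} {μ : Measure Ω} (ℱ : Filtration ℕ m0) (f : E → ℝ) (lam nu : ℝ)
    (al : ℕ → ℝ) {x e : ℕ → Ω → E} (hxmeas : ∀ k, StronglyMeasurable[ℱ k] (x k))
    (hupd : ∀ k, 1 ≤ k → ∀ ω, x (k + 1) ω =
      x k ω - al k • (gradient f (x k ω + nu • (x k ω - x (k - 1) ω)) - e k ω)
        + lam • (x k ω - x (k - 1) ω))
    (heL2 : ∀ k, 1 ≤ k → MemLp (e k) 2 μ) (hemean : ∀ k, 1 ≤ k → μ[e k|ℱ k] =ᵐ[μ] 0)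
    {g : ℕ} (hg : 1 ≤ g) :
    IsL2MartingaleDifference (ℱ.shift g) (fun i ω => al (g + i) • e (g + i) ω) μ where
  stronglyMeasurable i := stronglyMeasurable_smul_noise ℱ f lam nu al hxmeas hupd (by omega)
  memLp i := (heL2 (g + i) (by omega)).const_smul (al (g + i))
  condExp_eq_zero i := by
    change μ[al (g + i) • e (g + i)|ℱ (g + i)] =ᵐ[μ] 0
    filter_upwards [condExp_smul (al (g + i)) (e (g + i)) (ℱ (g + i)),
      hemean (g + i) (by omega)] with ω h1 h2
    simp [h1, h2]

end Gradient

theorem stmt_1_general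
    {Ω : Type*} {m0 : MeasurableSpace Ω} (μ : Measure Ω) [IsProbabilityMeasure μ]
    (ℱ : Filtration ℕ m0) {d : ℕ}
    (f : EuclideanSpace ℝ (Fin d) → ℝ)
    (lam nu : ℝ)
    (al : ℕ → ℝ)
    (x e : ℕ → Ω → EuclideanSpace ℝ (Fin d))
    (hxmeas : ∀ k, StronglyMeasurable[ℱ k] (x k))
    (hupd : ∀ k, 1 ≤ k → ∀ ω, x (k + 1) ω =
      x k ω - al k • (gradient f (x k ω + nu • (x k ω - x (k - 1) ω)) - e k ω)
        + lam • (x k ω - x (k - 1) ω))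
    (sg : ℝ) (heL2 : ∀ k, 1 ≤ k → MemLp (e k) 2 μ)
    (hemean : ∀ k, 1 ≤ k → μ[e k|ℱ k] =ᵐ[μ] 0)
    (hevar : ∀ k, 1 ≤ k → ∀ᵐ ω ∂μ, (μ[fun ω' => ‖e k ω'‖ ^ 2|ℱ k]) ω ≤ sg ^ 2)
    (be : ℕ → ℝ) (hbepos : ∀ k, 0 < be k) (hbemono : Monotone be)
    (hasum : Summable (fun k => al (k + 1) ^ 2 * be (k + 1) ^ 2))
    (T : ℝ) :
    ∀ᵐ ω ∂μ,
      Summable (fun k => be (timeIdx al T k) ^ 2 * aggErr al (timeIdx al T) e k ω ^ 2) := by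
  set γ := timeIdx al T
  have hD : ∀ g, 1 ≤ g → IsL2MartingaleDifference (ℱ.shift g)
      (fun i ω => al (g + i) • e (g + i) ω) μ := fun g hg =>
    isL2MartingaleDifference_smul_noise ℱ f lam nu al hxmeas hupd heL2 hemean hg
  have hvar : ∀ i, 1 ≤ i → ∫ ω, ‖al i • e i ω‖ ^ 2 ∂μ ≤ al i ^ 2 * sg ^ 2 := fun i hi => by
    simp_rw [norm_smul, mul_pow, Real.norm_eq_abs, sq_abs]
    rw [integral_const_mul]
    exact mul_le_mul_of_nonneg_left (integral_le_of_condExp_le (ℱ.le i) (hevar i hi)) (sq_nonneg _)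
  set P : ℕ → Ω → ℝ := fun k => partialSups
    (fun j ω => ‖∑ i ∈ range j, al (γ k + i) • e (γ k + i) ω‖) (γ (k + 1) - γ k)
  have hP : ∀ k, ∫ ω, be (γ k) ^ 2 * P k ω ^ 2 ∂μ ≤
      4 * sg ^ 2 * ∑ i ∈ Ico (γ k) (γ (k + 1)), al i ^ 2 * be i ^ 2 := fun k => by
    rw [sum_Ico_eq_sum_range]
    simpa only [add_zero] using (hD _ (one_le_timeIdx al T k)).integral_mul_partialSups_sq_le
      (a := fun i => al (γ k + i)) (b := fun i => be (γ k + i))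
      (fun i j hij => hbemono (by omega)) (hbepos _).le
      (fun i => hvar _ ((one_le_timeIdx al T k).trans (by omega))) (γ (k + 1) - γ k)
  have hint : ∀ k, Integrable (fun ω => be (γ k) ^ 2 * P k ω ^ 2) μ := fun k =>
    ((hD _ (one_le_timeIdx al T k)).memLp_partialSups _).integrable_sq.const_mul _
  have hsum : Summable fun k => ∫ ω, be (γ k) ^ 2 * P k ω ^ 2 ∂μ :=
    .of_nonneg_of_le (fun k => integral_nonneg fun ω => by positivity) hP <|
      (summable_sum_Ico_of_monotone (fun i => by positivity)
        ((summable_nat_add_iff (f := fun i => al i ^ 2 * be i ^ 2) 1).1 hasum)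
        (monotone_timeIdx al T)).mul_left _
  filter_upwards [ae_summable_of_summable_integral hint (fun k ω => by positivity) hsum] with ω hω
  refine hω.of_nonneg_of_le (fun k => by positivity) fun k => ?_
  gcongr
  · exact aggErr_nonneg al γ e k ω
  · exact aggErr_le_partialSups al γ e k ω

theorem stmt_1
    {Ω : Type*} {m0 : MeasurableSpace Ω} (μ : Measure Ω) [IsProbabilityMeasure μ]
    (ℱ : Filtration ℕ m0) {d : ℕ} (hd : 1 ≤ d)
    (f : EuclideanSpace ℝ (Fin d) → ℝ) (hf : Differentiable ℝ f)
    (hfb : BddBelow (Set.range f)) (L : ℝ) (hL : 0 < L)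
    (hlip : ∀ v w, ‖gradient f v - gradient f w‖ ≤ L * ‖v - w‖)
    (lam nu : ℝ) (hlam : lam ∈ Set.Ico (0:ℝ) 1) (hnu : 0 ≤ nu)
    (al : ℕ → ℝ) (hapos : ∀ k, 1 ≤ k → 0 < al k)
    (x0 : EuclideanSpace ℝ (Fin d)) (x e : ℕ → Ω → EuclideanSpace ℝ (Fin d))
    (hx0 : ∀ ω, x 0 ω = x0) (hx1 : ∀ ω, x 1 ω = x0)
    (hxmeas : ∀ k, StronglyMeasurable[ℱ k] (x k))
    (hupd : ∀ k, 1 ≤ k → ∀ ω, x (k + 1) ω =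
      x k ω - al k • (gradient f (x k ω + nu • (x k ω - x (k - 1) ω)) - e k ω)
        + lam • (x k ω - x (k - 1) ω))
    (sg : ℝ) (hsg : 0 ≤ sg) (heL2 : ∀ k, 1 ≤ k → MemLp (e k) 2 μ)
    (hemean : ∀ k, 1 ≤ k → μ[e k|ℱ k] =ᵐ[μ] 0)
    (hevar : ∀ k, 1 ≤ k → ∀ᵐ ω ∂μ, (μ[fun ω' => ‖e k ω'‖ ^ 2|ℱ k]) ω ≤ sg ^ 2)
    (be : ℕ → ℝ) (hbepos : ∀ k, 0 < be k) (hbemono : Monotone be)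
    (hamono : ∀ k, 1 ≤ k → al (k + 1) ≤ al k)
    (hadiv : Tendsto (fun n => ∑ i ∈ Finset.Icc 1 n, al i) atTop atTop)
    (hasum : Summable (fun k => al (k + 1) ^ 2 * be (k + 1) ^ 2))
    (T : ℝ) (hT : 0 < T) :
    ∀ᵐ ω ∂μ,
      Summable (fun k => be (timeIdx al T k) ^ 2 * aggErr al (timeIdx al T) e k ω ^ 2) :=
  stmt_1_general μ ℱ f lam nu al x e hxmeas hupd sg heL2 hemean hevar be hbepos hbemono hasum T
end
end

section
/- Let f : ℝ^d → ℝ be differentiable and satisfy the Łojasiewicz inequality at a critical point x* with exponent θ ∈ [1/2,1), and let ζ > 0. Then the merit function M : ℝ^d × ℝ^d → ℝ, M(x,z) = f(z) + ζ‖z − x‖², satisfies the Łojasiewicz inequality at (x*, x*) with the same exponent θ: there exist η ∈ (0,∞], a neighborhood U(x*) of x*, and a constant C > 0 such that for all x, z ∈ V(x*) := U(x*) ∩ {y ∈ ℝ^d : |f(y) − f(x*)| < η}, one has ‖∇M(x,z)‖ ≥ C |M(x,z) − f(x*)|^θ. -/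
/-!
Write `r = ‖w - v‖`, so that the first component of `∇M(v, w)` has norm `A = 2ζr` and
`‖∇f(w)‖ ≤ A + B` with `B` the norm of the second component. By subadditivity of
`t ↦ t^θ`, `|M(v, w) - f(x*)|^θ ≤ |f(w) - f(x*)|^θ + ζ^θ r^{2θ}`. The first term is at most
`(A + B)/C_f` by the Łojasiewicz inequality for `f`, and since `2θ ≥ 1`, on pairs with
`r ≤ 1` the second is at most `ζ^θ r`, a multiple of `A`. Finally `A + B ≤ √2 ‖∇M(v, w)‖`.
-/

open Filter Topology ENNReal

lemma add_le_sqrt_two_mul_sqrt_sq_add_sq (a b : ℝ) : a + b ≤ √2 * √(a ^ 2 + b ^ 2) := by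
  rw [← Real.sqrt_mul zero_le_two]
  exact (le_abs_self _).trans (Real.abs_le_sqrt (by nlinarith [sq_nonneg (a - b)]))

lemma rpow_sq_le_self {r θ : ℝ} (hr0 : 0 ≤ r) (hr1 : r ≤ 1) (hθ : 1 / 2 ≤ θ) :
    (r ^ 2) ^ θ ≤ r := by
  rw [← Real.rpow_natCast_mul hr0]
  calc r ^ ((2 : ℕ) * θ) ≤ r ^ (1 : ℝ) :=
        Real.rpow_le_rpow_of_exponent_ge' hr0 hr1 zero_le_one (by push_cast; linarith)
    _ = r := Real.rpow_one r

lemma rpow_abs_add_mul_sq_le {a g r ζ θ Cf : ℝ} (hζ : 0 < ζ) (hθ : 1 / 2 ≤ θ)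
    (hθ1 : θ ≤ 1) (hCf : 0 < Cf) (hloj : Cf * |a| ^ θ ≤ g) (hr0 : 0 ≤ r) (hr1 : r ≤ 1) :
    |a + ζ * r ^ 2| ^ θ ≤ g / Cf + ζ ^ θ * r := by
  have hθ0 : 0 ≤ θ := by linarith
  calc |a + ζ * r ^ 2| ^ θ ≤ (|a| + ζ * r ^ 2) ^ θ := by
        gcongr
        exact (abs_add_le a _).trans_eq (by rw [abs_of_nonneg (by positivity : 0 ≤ ζ * r ^ 2)])
    _ ≤ |a| ^ θ + (ζ * r ^ 2) ^ θ :=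
        Real.rpow_add_le_add_rpow (abs_nonneg a) (by positivity) hθ0 hθ1
    _ = |a| ^ θ + ζ ^ θ * (r ^ 2) ^ θ := by rw [Real.mul_rpow hζ.le (by positivity)]
    _ ≤ g / Cf + ζ ^ θ * r := by
        gcongr
        · rwa [le_div_iff₀ hCf, mul_comm]
        · exact rpow_sq_le_self hr0 hr1 hθ

lemma rpow_abs_merit_le {E : Type*} [SeminormedAddCommGroup E] [NormedSpace ℝ E]
    {p v w : E} {a ζ θ Cf : ℝ} (hζ : 0 < ζ) (hθ : 1 / 2 ≤ θ) (hθ1 : θ ≤ 1)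
    (hCf : 0 < Cf) (hloj : Cf * |a| ^ θ ≤ ‖p‖) (hvw : ‖w - v‖ ≤ 1) :
    |a + ζ * ‖w - v‖ ^ 2| ^ θ ≤
      (1 / Cf + ζ ^ θ / (2 * ζ)) *
        (‖(2 * ζ) • (v - w)‖ + ‖p + (2 * ζ) • (w - v)‖) := by
  have hA : ‖(2 * ζ) • (v - w)‖ = 2 * ζ * ‖w - v‖ := by
    rw [norm_smul_of_nonneg (by positivity), norm_sub_rev]
  set A := ‖(2 * ζ) • (v - w)‖
  set B := ‖p + (2 * ζ) • (w - v)‖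
  have hp : ‖p‖ ≤ A + B := by
    calc ‖p‖ = ‖(p + (2 * ζ) • (w - v)) - (2 * ζ) • (w - v)‖ := by
          rw [add_sub_cancel_right]
      _ ≤ B + ‖(2 * ζ) • (w - v)‖ := norm_sub_le _ _
      _ = A + B := by rw [add_comm, ← norm_neg, ← smul_neg, neg_sub]
  have hB : 0 ≤ B := norm_nonneg _
  calc |a + ζ * ‖w - v‖ ^ 2| ^ θ ≤ ‖p‖ / Cf + ζ ^ θ * ‖w - v‖ :=
        rpow_abs_add_mul_sq_le hζ hθ hθ1 hCf hloj (norm_nonneg _) hvw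
    _ = ‖p‖ / Cf + ζ ^ θ / (2 * ζ) * A := by rw [hA]; field_simp
    _ ≤ (A + B) / Cf + ζ ^ θ / (2 * ζ) * (A + B) := by gcongr; linarith
    _ = (1 / Cf + ζ ^ θ / (2 * ζ)) * (A + B) := by ring

theorem stmt_9_general {d : ℕ} (f : EuclideanSpace ℝ (Fin d) → ℝ)
    (zeta : ℝ) (hzeta : 0 < zeta)
    (xstar : EuclideanSpace ℝ (Fin d))
    (th : ℝ) (hth : th ∈ Set.Ico (1/2 : ℝ) 1)
    (Cf : ℝ) (hCf : 0 < Cf) (eta : ℝ≥0∞) (heta : 0 < eta)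
    (U : Set (EuclideanSpace ℝ (Fin d))) (hU : U ∈ nhds xstar)
    (hLoj : ∀ v ∈ U, 0 < |f v - f xstar| → ENNReal.ofReal |f v - f xstar| < eta →
      Cf * |f v - f xstar| ^ th ≤ ‖gradient f v‖) :
    ∃ eta' : ℝ≥0∞, 0 < eta' ∧ ∃ U' ∈ nhds xstar, ∃ C : ℝ, 0 < C ∧
      ∀ v ∈ U', ∀ w ∈ U',
        ENNReal.ofReal |f v - f xstar| < eta' → ENNReal.ofReal |f w - f xstar| < eta' →
        C * |f w + zeta * ‖w - v‖ ^ 2 - f xstar| ^ th ≤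
          Real.sqrt (‖(2 * zeta) • (v - w)‖ ^ 2
            + ‖gradient f w + (2 * zeta) • (w - v)‖ ^ 2) := by
  obtain ⟨hth, hth1⟩ := hth
  set K := 1 / Cf + zeta ^ th / (2 * zeta)
  have hK : 0 < K := by positivity
  refine ⟨eta, heta, U ∩ Metric.ball xstar (1 / 2),
    inter_mem hU (Metric.ball_mem_nhds _ one_half_pos), 1 / (K * √2), by positivity, ?_⟩
  rintro v ⟨-, hv⟩ w ⟨hwU, hw⟩ - hwe
  have hvw : ‖w - v‖ ≤ 1 := by
    rw [← dist_eq_norm]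
    linarith [dist_triangle_right w v xstar, Metric.mem_ball.mp hv, Metric.mem_ball.mp hw]
  have hloj : Cf * |f w - f xstar| ^ th ≤ ‖gradient f w‖ := by
    rcases (abs_nonneg (f w - f xstar)).eq_or_lt with h0 | h0
    · rw [← h0, Real.zero_rpow (by linarith), mul_zero]
      exact norm_nonneg _
    · exact hLoj w hwU h0 hwe
  have hmerit := rpow_abs_merit_le hzeta hth hth1.le hCf hloj hvw
  rw [← add_sub_right_comm] at hmerit
  rw [div_mul_eq_mul_div, one_mul, div_le_iff₀ (by positivity)]
  calc _ ≤ K * (√2 * √(‖(2 * zeta) • (v - w)‖ ^ 2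
            + ‖gradient f w + (2 * zeta) • (w - v)‖ ^ 2)) :=
        hmerit.trans (by gcongr; exact add_le_sqrt_two_mul_sqrt_sq_add_sq _ _)
    _ = _ := by ring

theorem stmt_9 {d : ℕ} (hd : 1 ≤ d) (f : EuclideanSpace ℝ (Fin d) → ℝ)
    (hf : Differentiable ℝ f) (zeta : ℝ) (hzeta : 0 < zeta)
    (xstar : EuclideanSpace ℝ (Fin d)) (hcrit : gradient f xstar = 0)
    (th : ℝ) (hth : th ∈ Set.Ico (1/2 : ℝ) 1)
    (Cf : ℝ) (hCf : 0 < Cf) (eta : ℝ≥0∞) (heta : 0 < eta)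
    (U : Set (EuclideanSpace ℝ (Fin d))) (hU : U ∈ nhds xstar)
    (hLoj : ∀ v ∈ U, 0 < |f v - f xstar| → ENNReal.ofReal |f v - f xstar| < eta →
      Cf * |f v - f xstar| ^ th ≤ ‖gradient f v‖) :
    ∃ eta' : ℝ≥0∞, 0 < eta' ∧ ∃ U' ∈ nhds xstar, ∃ C : ℝ, 0 < C ∧
      ∀ v ∈ U', ∀ w ∈ U',
        ENNReal.ofReal |f v - f xstar| < eta' → ENNReal.ofReal |f w - f xstar| < eta' →
        C * |f w + zeta * ‖w - v‖ ^ 2 - f xstar| ^ th ≤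
          Real.sqrt (‖(2 * zeta) • (v - w)‖ ^ 2
            + ‖gradient f w + (2 * zeta) • (w - v)‖ ^ 2) :=
  stmt_9_general f zeta hzeta xstar th hth Cf hCf eta heta U hU hLoj
end

section
/- Let f : ℝ² → ℝ be given by f(x₁, x₂) = sin(x₁), let {α_k} be positive reals, and let {e^k} ⊂ ℝ² be any sequence with e^k ∈ {(0,1), (0,−1)} for all k. Consider SGD iterates x^{k+1} = x^k − α_k(∇f(x^k) − e^k) from any x^1 ∈ ℝ². Then ‖x^{k+1} − x^k‖ = α_k·√(‖∇f(x^k)‖² + 1) ≥ α_k for every k; consequently, if Σ_k α_k = ∞ then Σ_k ‖x^{k+1} − x^k‖ = ∞, so the iterates do not have finite length. -/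
open Filter

/-
The noise `e^k = (0, ±1)` is a unit vector orthogonal to `∇f(x^k) = (cos x^k_1, 0)`, so by
Pythagoras every step has length `α_k √(‖∇f(x^k)‖² + 1) ≥ α_k`. The lengths therefore dominate
the step sizes, whose partial sums diverge.
-/

theorem hasGradientAt_comp_apply {ι : Type*} [Fintype ι] [DecidableEq ι] {g : ℝ → ℝ} {g' : ℝ}
    {p : EuclideanSpace ℝ ι} (i : ι) (hg : HasDerivAt g g' (p i)) :
    HasGradientAt (fun v : EuclideanSpace ℝ ι => g (v i)) (EuclideanSpace.single i g') p := by
  rw [hasGradientAt_iff_hasFDerivAt]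
  refine (hg.comp_hasFDerivAt p (EuclideanSpace.proj (𝕜 := ℝ) i).hasFDerivAt).congr_fderiv ?_
  ext v
  simp [EuclideanSpace.inner_single_left]

theorem norm_smul_sub_of_inner_eq_zero {E : Type*} [NormedAddCommGroup E] [InnerProductSpace ℝ E]
    {g e : E} (horth : inner ℝ g e = 0) (he : ‖e‖ = 1) {α : ℝ} (hα : 0 ≤ α) :
    ‖α • (g - e)‖ = α * Real.sqrt (‖g‖ ^ 2 + 1) := by
  rw [norm_smul, Real.norm_of_nonneg hα, ← Real.sqrt_sq (norm_nonneg (g - e)),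
    norm_sub_sq_real, horth, he, mul_zero, sub_zero, one_pow]

theorem not_summable_of_le_of_tendsto_sum_Icc {a b : ℕ → ℝ} (hb : ∀ k, 0 ≤ b k)
    (hab : ∀ k, 1 ≤ k → a k ≤ b k)
    (ha : Tendsto (fun n => ∑ i ∈ Finset.Icc 1 n, a i) atTop atTop) : ¬ Summable b := by
  intro hsum
  have hbound : ∀ n, ∑ i ∈ Finset.Icc 1 n, a i ≤ ∑' k, b k := fun n =>
    calc ∑ i ∈ Finset.Icc 1 n, a i
        ≤ ∑ i ∈ Finset.Icc 1 n, b i :=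
          Finset.sum_le_sum fun i hi => hab i (Finset.mem_Icc.mp hi).1
      _ ≤ ∑' k, b k := hsum.sum_le_tsum _ fun i _ => hb i
  exact not_tendsto_atTop_of_tendsto_nhds (tendsto_const_nhds (x := ∑' k, b k))
    (tendsto_atTop_mono' _ (Eventually.of_forall hbound) ha)

theorem stmt_18 (f : EuclideanSpace ℝ (Fin 2) → ℝ)
    (hfdef : ∀ v : EuclideanSpace ℝ (Fin 2), f v = Real.sin (v 0))
    (a : ℕ → ℝ) (hapos : ∀ k, 1 ≤ k → 0 < a k)
    (e : ℕ → EuclideanSpace ℝ (Fin 2))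
    (he : ∀ k, e k 0 = 0 ∧ (e k 1 = 1 ∨ e k 1 = -1))
    (x : ℕ → EuclideanSpace ℝ (Fin 2))
    (hupd : ∀ k, 1 ≤ k → x (k + 1) = x k - a k • (gradient f (x k) - e k)) :
    (∀ k, 1 ≤ k →
      ‖x (k + 1) - x k‖ = a k * Real.sqrt (‖gradient f (x k)‖ ^ 2 + 1) ∧
      a k ≤ ‖x (k + 1) - x k‖) ∧
    (Tendsto (fun n => ∑ i ∈ Finset.Icc 1 n, a i) atTop atTop →
      ¬ Summable fun k => ‖x (k + 1) - x k‖) := by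
  have hgrad : ∀ p, gradient f p = EuclideanSpace.single 0 (Real.cos (p 0)) := fun p => by
    rw [show f = fun v => Real.sin (v 0) from funext hfdef]
    exact (hasGradientAt_comp_apply 0 (Real.hasDerivAt_sin (p 0))).gradient
  have horth : ∀ k, inner ℝ (gradient f (x k)) (e k) = 0 := fun k => by
    simp [hgrad, EuclideanSpace.inner_single_left, (he k).1]
  have hunit : ∀ k, ‖e k‖ = 1 := fun k => by
    rcases (he k).2 with h | h <;> simp [EuclideanSpace.norm_eq, Fin.sum_univ_two, (he k).1, h]
  have hstep : ∀ k, 1 ≤ k →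
      ‖x (k + 1) - x k‖ = a k * Real.sqrt (‖gradient f (x k)‖ ^ 2 + 1) := fun k hk => by
    rw [hupd k hk, sub_sub_cancel_left, norm_neg,
      norm_smul_sub_of_inner_eq_zero (horth k) (hunit k) (hapos k hk).le]
  have hlower : ∀ k, 1 ≤ k → a k ≤ ‖x (k + 1) - x k‖ := fun k hk => by
    rw [hstep k hk]
    exact le_mul_of_one_le_right (hapos k hk).le
      (Real.one_le_sqrt.mpr (le_add_of_nonneg_left (sq_nonneg _)))
  exact ⟨fun k hk => ⟨hstep k hk, hlower k hk⟩,
    not_summable_of_le_of_tendsto_sum_Icc (fun _ => norm_nonneg _) hlower⟩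
end
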